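/- arXiv:2203.12525 — 5 statements merged into one kernel-verified Lean document; each statement's English description precedes it below -/
import Mathlib

section
/- For a connected simple graph G with at least 3 vertices and any subset U of V(G), the collection Δ^G_U = { E(G) \ E(N) : N a nucleus of G with U ⊆ V(N) } is closed under taking subsets, i.e., it is an abstract simplicial complex (where a nucleus of G is a connected subgraph N whose vertex set is a vertex cover of G). -/
open SimpleGraph

/-- `Shade_v(F)`: edges of `G` with an endpoint connected to `v` by an `F`-path. -/
def Shade {V : Type*} (G : SimpleGraph V) (v : V) (F : Set (Sym2 V)) : Set (Sym2 V) :=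
  {e ∈ G.edgeSet | ∃ u ∈ e, (SimpleGraph.fromEdgeSet F).Reachable u v}

/-- The simplicial complex `A_v`. -/
def Avert {V : Type*} (G : SimpleGraph V) (v : V) : Set (Set (Sym2 V)) :=
  {F | F ⊆ G.edgeSet ∧ Shade G v F ⊂ G.edgeSet}

/-- Vertex set of the edge-induced subgraph `G_σ`. -/
def edgeVerts {V : Type*} (σ : Set (Sym2 V)) : Set V :=
  {u | ∃ e ∈ σ, u ∈ e}

/-- Connectedness of the edge-induced subgraph `G_σ`. -/
def edgeConnected {V : Type*} (σ : Set (Sym2 V)) : Prop :=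
  σ.Nonempty ∧ ∀ u ∈ edgeVerts σ, ∀ w ∈ edgeVerts σ,
    (SimpleGraph.fromEdgeSet σ).Reachable u w

/-- `X` is a vertex cover of `G`. -/
def IsVertexCover {V : Type*} (G : SimpleGraph V) (X : Set V) : Prop :=
  ∀ e ∈ G.edgeSet, ∃ u ∈ e, u ∈ X

/-- A nucleus of `G`: a connected subgraph whose vertex set is a vertex cover. -/
def IsNucleus {V : Type*} (G : SimpleGraph V) (N : G.Subgraph) : Prop :=
  N.Connected ∧ _root_.IsVertexCover G N.verts

/-- The `U`-nucleus complex `Δ^G_U`. -/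
def nucleusComplex {V : Type*} (G : SimpleGraph V) (U : Set V) : Set (Set (Sym2 V)) :=
  {S | ∃ N : G.Subgraph, IsNucleus G N ∧ U ⊆ N.verts ∧ S = G.edgeSet \ N.edgeSet}

/-
If `N` is a nucleus and `T ⊆ E(G) \ E(N)`, add to `N` every edge of `G` outside `T`. Each added
edge meets `V(N)` because `V(N)` is a vertex cover, so the enlarged subgraph is still connected;
its vertex set still contains `U` and covers `G`, and the edges of `G` it misses are exactly `T`.
-/

namespace SimpleGraph

variable {V : Type*} {G : SimpleGraph V}

def subgraphOfEdges (G : SimpleGraph V) (A : Set (Sym2 V)) : G.Subgraph :=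
  ⨆ e : {e : V × V // G.Adj e.1 e.2 ∧ s(e.1, e.2) ∈ A}, G.subgraphOfAdj e.2.1

@[simp]
lemma edgeSet_subgraphOfEdges (A : Set (Sym2 V)) :
    (G.subgraphOfEdges A).edgeSet = G.edgeSet ∩ A := by
  ext e
  induction e using Sym2.ind with
  | _ u w =>
    simp only [subgraphOfEdges, Subgraph.edgeSet_iSup, edgeSet_subgraphOfAdj, Set.mem_iUnion,
      Set.mem_singleton_iff, Sym2.eq_iff, Set.mem_inter_iff, mem_edgeSet]
    constructor
    · rintro ⟨⟨⟨a, b⟩, hab, hA⟩, ⟨rfl, rfl⟩ | ⟨rfl, rfl⟩⟩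
      · exact ⟨hab, hA⟩
      · exact ⟨hab.symm, Sym2.eq_swap ▸ hA⟩
    · exact fun h => ⟨⟨(u, w), h⟩, .inl ⟨rfl, rfl⟩⟩

namespace Subgraph

lemma Connected.sup_iSup {ι : Sort*} {N : G.Subgraph} {K : ι → G.Subgraph} (hN : N.Connected)
    (hK : ∀ i, (K i).Connected) (hNK : ∀ i, (N ⊓ K i).verts.Nonempty) :
    (N ⊔ ⨆ i, K i).Connected := by
  obtain ⟨u, hu⟩ := hN.nonempty
  rw [Subgraph.connected_iff', connected_iff_exists_forall_reachable]
  refine ⟨⟨u, Or.inl hu⟩, ?_⟩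
  rintro ⟨v, hv | hv⟩
  · exact (hN.preconnected ⟨u, hu⟩ ⟨v, hv⟩).map (inclusion le_sup_left)
  · obtain ⟨i, hi⟩ := Set.mem_iUnion.mp (verts_iSup ▸ hv)
    have hle : N ⊔ K i ≤ N ⊔ ⨆ i, K i := sup_le_sup_left (le_iSup K i) N
    exact ((connected_sup hN.preconnected (hK i).preconnected (hNK i)).preconnected
      ⟨u, Or.inl hu⟩ ⟨v, Or.inr hi⟩).map (inclusion hle)

end Subgraph

end SimpleGraph

lemma IsVertexCover.mono {V : Type*} {G : SimpleGraph V} {X Y : Set V}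
    (hX : _root_.IsVertexCover G X) (hXY : X ⊆ Y) : _root_.IsVertexCover G Y := fun e he =>
  let ⟨u, hue, huX⟩ := hX e he
  ⟨u, hue, hXY huX⟩

lemma IsNucleus.sup_subgraphOfEdges {V : Type*} {G : SimpleGraph V} {N : G.Subgraph}
    (hN : IsNucleus G N) (A : Set (Sym2 V)) : IsNucleus G (N ⊔ G.subgraphOfEdges A) := by
  refine ⟨hN.1.sup_iSup (fun e => Subgraph.subgraphOfAdj_connected e.2.1)
    fun ⟨⟨u, w⟩, huw, _⟩ => ?_, hN.2.mono Set.subset_union_left⟩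
  obtain ⟨x, hx, hxN⟩ := hN.2 s(u, w) huw
  exact ⟨x, hxN, by simpa using hx⟩

theorem stmt_0_general {V : Type*} (G : SimpleGraph V) (U : Set V) :
    ∀ S ∈ nucleusComplex G U, ∀ T ⊆ S, T ∈ nucleusComplex G U := by
  rintro _ ⟨N, hN, hU, rfl⟩ T hT
  refine ⟨N ⊔ G.subgraphOfEdges Tᶜ, hN.sup_subgraphOfEdges Tᶜ,
    hU.trans Set.subset_union_left, ?_⟩
  rw [Subgraph.edgeSet_sup, edgeSet_subgraphOfEdges]
  ext e
  have heT := @hT e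
  simp only [Set.mem_sdiff, Set.mem_union, Set.mem_inter_iff, Set.mem_compl_iff] at heT ⊢
  tauto

theorem stmt_0 {V : Type*} [Fintype V] (G : SimpleGraph V) (hG : G.Connected)
    (h3 : 3 ≤ Fintype.card V) (U : Set V) :
    ∀ S ∈ nucleusComplex G U, ∀ T ⊆ S, T ∈ nucleusComplex G U :=
  stmt_0_general G U
end

section
/- Let G be a connected simple graph with at least 3 vertices, let x, y ∈ V(G) be distinct, and let σ ⊆ E(G) be nonempty. Then σ ∈ A_y \ A_x if and only if: (1) the edge-induced subgraph G_σ is connected, (2) the vertex set V_σ of G_σ is a vertex cover of G, and (3) x ∈ V_σ and y ∉ V_σ. Here A_v = { F ⊆ E(G) : Shade_v(F) ⊊ E(G) }. -/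
open SimpleGraph

/-!
Write `E` for the edge set of `G`. Once `σ ∉ A_x`, i.e. `Shade_x(σ) = E`, every edge has an
endpoint `σ`-reachable from `x`; this forces `x ∈ V_σ` (a vertex outside `V_σ` reaches only
itself), makes every vertex of `V_σ` reachable from `x`, and makes `V_σ` a vertex cover.
Conversely such a `σ` shades everything from `x`. Finally `Shade_y(σ) = E` as well exactly
when `y` lies in the `σ`-component of `x`, i.e. when `y ∈ V_σ`.
-/

section Shade

variable {V : Type*} {G : SimpleGraph V} {σ : Set (Sym2 V)}

lemma shade_subset_edgeSet (v : V) : Shade G v σ ⊆ G.edgeSet := fun _ he => he.1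

lemma mem_Avert_iff (hσE : σ ⊆ G.edgeSet) (v : V) :
    σ ∈ Avert G v ↔ Shade G v σ ≠ G.edgeSet :=
  ⟨fun h => h.2.ne, fun h => ⟨hσE, (shade_subset_edgeSet v).ssubset_of_ne h⟩⟩

lemma eq_of_reachable_of_notMem_edgeVerts {u v : V} (hv : v ∉ edgeVerts σ)
    (h : (fromEdgeSet σ).Reachable u v) : u = v := by
  obtain ⟨p⟩ := h.symm
  cases p with
  | nil => rfl
  | cons hadj _ =>
    rw [fromEdgeSet_adj] at hadj
    exact absurd ⟨_, hadj.1, Sym2.mem_mk_left _ _⟩ hv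

lemma reachable_of_mem_of_mem {e : Sym2 V} (he : e ∈ σ) {u w : V} (hu : u ∈ e) (hw : w ∈ e) :
    (fromEdgeSet σ).Reachable u w := by
  rcases eq_or_ne u w with rfl | hne
  · rfl
  · exact Adj.reachable ((fromEdgeSet_adj σ).mpr ⟨(Sym2.mem_and_mem_iff hne).mp ⟨hu, hw⟩ ▸ he, hne⟩)

lemma shade_eq_of_reachable {v w : V} (h : (fromEdgeSet σ).Reachable v w) :
    Shade G v σ = Shade G w σ := by
  ext e
  exact and_congr_right fun _ =>
    exists_congr fun u => and_congr_right fun _ => ⟨(·.trans h), (·.trans h.symm)⟩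

lemma shade_ne_edgeSet_of_notMem_edgeVerts (hσE : σ ⊆ G.edgeSet) (hσne : σ.Nonempty) {v : V}
    (hv : v ∉ edgeVerts σ) : Shade G v σ ≠ G.edgeSet := by
  obtain ⟨e, he⟩ := hσne
  intro hshade
  obtain ⟨-, u, hue, huv⟩ : e ∈ Shade G v σ := hshade ▸ hσE he
  exact hv ⟨e, he, eq_of_reachable_of_notMem_edgeVerts hv huv ▸ hue⟩

lemma shade_eq_edgeSet_iff (hσE : σ ⊆ G.edgeSet) (hσne : σ.Nonempty) (x : V) :
    Shade G x σ = G.edgeSet ↔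
      edgeConnected σ ∧ _root_.IsVertexCover G (edgeVerts σ) ∧ x ∈ edgeVerts σ := by
  constructor
  · intro hshade
    have hxV : x ∈ edgeVerts σ := by
      by_contra hxV
      exact shade_ne_edgeSet_of_notMem_edgeVerts hσE hσne hxV hshade
    have reachable_x : ∀ w ∈ edgeVerts σ, (fromEdgeSet σ).Reachable w x := by
      rintro w ⟨e, he, hwe⟩
      obtain ⟨-, u, hue, hux⟩ : e ∈ Shade G x σ := hshade ▸ hσE he
      exact (reachable_of_mem_of_mem he hwe hue).trans hux
    refine ⟨⟨hσne, fun u hu w hw => (reachable_x u hu).trans (reachable_x w hw).symm⟩, ?_, hxV⟩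
    intro e he
    obtain ⟨-, u, hue, hux⟩ : e ∈ Shade G x σ := hshade ▸ he
    by_cases huV : u ∈ edgeVerts σ
    · exact ⟨u, hue, huV⟩
    · exact ⟨u, hue, eq_of_reachable_of_notMem_edgeVerts huV hux.symm ▸ hxV⟩
  · rintro ⟨⟨-, hconn⟩, hcover, hxV⟩
    refine (shade_subset_edgeSet x).antisymm fun e he => ?_
    obtain ⟨u, hue, huV⟩ := hcover e he
    exact ⟨he, u, hue, hconn u huV x hxV⟩

end Shade

theorem stmt_3_general {V : Type*} (G : SimpleGraph V) (x y : V)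
    (σ : Set (Sym2 V)) (hσE : σ ⊆ G.edgeSet) (hσne : σ.Nonempty) :
    σ ∈ Avert G y \ Avert G x ↔
      edgeConnected σ ∧ _root_.IsVertexCover G (edgeVerts σ) ∧
        x ∈ edgeVerts σ ∧ y ∉ edgeVerts σ := by
  rw [Set.mem_sdiff, mem_Avert_iff hσE, mem_Avert_iff hσE, not_not,
    shade_eq_edgeSet_iff hσE hσne x]
  constructor
  · rintro ⟨hy, hconn, hcover, hxV⟩
    refine ⟨hconn, hcover, hxV, fun hyV => hy ?_⟩
    rw [shade_eq_of_reachable (hconn.2 y hyV x hxV)]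
    exact (shade_eq_edgeSet_iff hσE hσne x).mpr ⟨hconn, hcover, hxV⟩
  · rintro ⟨hconn, hcover, hxV, hyV⟩
    exact ⟨shade_ne_edgeSet_of_notMem_edgeVerts hσE hσne hyV, hconn, hcover, hxV⟩

theorem stmt_3 {V : Type*} [Fintype V] (G : SimpleGraph V) (hG : G.Connected)
    (h3 : 3 ≤ Fintype.card V) (x y : V) (hxy : x ≠ y)
    (σ : Set (Sym2 V)) (hσE : σ ⊆ G.edgeSet) (hσne : σ.Nonempty) :
    σ ∈ Avert G y \ Avert G x ↔
      edgeConnected σ ∧ _root_.IsVertexCover G (edgeVerts σ) ∧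
        x ∈ edgeVerts σ ∧ y ∉ edgeVerts σ :=
  stmt_3_general G x y σ hσE hσne
end

section
/- Let V be a discrete vector field (a matching on the face poset pairing each simplex with at most one simplex of dimension one higher or lower) on a finite abstract simplicial complex K, and suppose there is a function w from simplices of K to ℕ such that whenever (α, β) ∈ V one has w(α) ≥ w(β), and whenever γ is a facet of β (i.e., γ ⊂ β with |β| = |γ| + 1) and (γ, β) ∉ V, one has w(β) > w(γ). Then V admits no nontrivial closed V-path, i.e., V is acyclic. -/
theorem stmt_9 {E : Type*} [DecidableEq E] (K : Set (Finset E))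
    (hKfin : K.Finite)
    (hKclosed : ∀ s ∈ K, ∀ t ⊆ s, t ∈ K)
    (V : Set (Finset E × Finset E))
    (hVmem : ∀ p ∈ V, p.1 ∈ K ∧ p.2 ∈ K ∧ p.1 ⊆ p.2 ∧ p.2.card = p.1.card + 1)
    (hVmatch : ∀ p ∈ V, ∀ q ∈ V,
      (p.1 = q.1 ∨ p.1 = q.2 ∨ p.2 = q.1 ∨ p.2 = q.2) → p = q)
    (w : Finset E → ℕ)
    (hw1 : ∀ p ∈ V, w p.2 ≤ w p.1)
    (hw2 : ∀ β ∈ K, ∀ γ ⊆ β, β.card = γ.card + 1 → (γ, β) ∉ V → w γ < w β)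
    -- a hypothetical nontrivial closed V-path
    (r : ℕ) (a : Fin (r + 2) → Finset E) (b : Fin (r + 1) → Finset E)
    (ha : ∀ i : Fin (r + 1), (a i.castSucc, b i) ∈ V)
    (hb : ∀ i : Fin (r + 1),
      a i.succ ⊆ b i ∧ (b i).card = (a i.succ).card + 1 ∧ a i.succ ≠ a i.castSucc)
    (hclosed : a (Fin.last (r + 1)) = a 0) :
    False := by
  have key : ∀ i : Fin (r + 1), w (a i.succ) < w (a i.castSucc) := by
    intro i
    obtain ⟨hsub, hcard, hne⟩ := hb i
    have hmem := hVmem _ (ha i)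
    have hnotV : (a i.succ, b i) ∉ V := by
      intro h
      exact hne (congrArg Prod.fst
        (hVmatch _ h _ (ha i) (Or.inr (Or.inr (Or.inr rfl)))))
    exact lt_of_lt_of_le (hw2 _ hmem.2.1 _ hsub hcard hnotV) (hw1 _ (ha i))
  have main : ∀ i : ℕ, ∀ h : i < r + 2, w (a ⟨i, h⟩) + i ≤ w (a 0) := by
    intro i
    induction i with
    | zero => intro h; simp
    | succ n ih =>
      intro h
      have hn : n < r + 1 := Nat.lt_of_succ_lt_succ h
      have hk := key ⟨n, hn⟩
      have hcs : (⟨n, hn⟩ : Fin (r + 1)).castSucc = ⟨n, Nat.lt_of_lt_of_le hn (Nat.le_succ _)⟩ := rfl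
      have hsc : (⟨n, hn⟩ : Fin (r + 1)).succ = ⟨n + 1, h⟩ := rfl
      rw [hcs, hsc] at hk
      have := ih (Nat.lt_of_lt_of_le hn (Nat.le_succ _))
      omega
  have := main (r + 1) (Nat.lt_succ_self _)
  have hlast : (⟨r + 1, Nat.lt_succ_self _⟩ : Fin (r + 2)) = Fin.last (r + 1) := rfl
  rw [hlast, hclosed] at this
  omega
end

section
/- For the cycle graph C_n with n ≥ 3 vertices, the connected vertex covers (i.e., the nuclei) of C_n are exactly: the paths with n − 2 edges, the paths with n − 1 edges, and C_n itself. -/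
open SimpleGraph

/-! A subgraph `N` of the cycle is determined, up to its vertex set, by its gaps: the indices `i`
with `s(i, i + 1) ∉ N`; its edges number `n` minus the gaps. Three gaps `a < b < c` cut the cycle
into three arcs, and every remaining edge stays inside one arc, so a connected `N` lies in a single
arc and cannot cover the deleted edge joining the other two. Conversely, an uncovered edge
`s(i, i + 1)` forces the three gaps `i - 1`, `i`, `i + 1`, so a connected `N` with at least `n - 2`
edges is a vertex cover. Without gaps, `N = ⊤`. -/

theorem Set.exists_lt_lt_of_two_lt_ncard {α : Type*} [LinearOrder α] {s : Set α}
    (hs : s.Finite) (h : 2 < s.ncard) : ∃ a ∈ s, ∃ b ∈ s, ∃ c ∈ s, a < b ∧ b < c := by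
  rw [Set.ncard_eq_toFinset_card s hs] at h
  let f := hs.toFinset.orderEmbOfFin rfl
  have hmem : ∀ i, f i ∈ s := fun i => hs.mem_toFinset.mp (Finset.orderEmbOfFin_mem _ _ i)
  exact ⟨_, hmem ⟨0, by omega⟩, _, hmem ⟨1, by omega⟩, _, hmem ⟨2, by omega⟩,
    f.lt_iff_lt.mpr (Fin.mk_lt_mk.mpr zero_lt_one), f.lt_iff_lt.mpr (Fin.mk_lt_mk.mpr one_lt_two)⟩

theorem Fin.one_add_one_ne_zero {n : ℕ} : (1 + 1 : Fin (n + 3)) ≠ 0 := by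
  rw [Ne, Fin.ext_iff, Fin.val_add, Fin.val_one, Fin.val_zero, Nat.mod_eq_of_lt (by omega)]
  omega

namespace SimpleGraph

variable {V β : Type*} {G : SimpleGraph V}

theorem Subgraph.Connected.apply_eq_of_forall_adj {H : G.Subgraph} (hH : H.Connected)
    {f : V → β} (hf : ∀ x y, H.Adj x y → f x = f y) {u w : V} (hu : u ∈ H.verts)
    (hw : w ∈ H.verts) : f u = f w := by
  have hreach := (reachable_iff_reflTransGen _ _).mp (hH.preconnected ⟨u, hu⟩ ⟨w, hw⟩)
  have := Relation.ReflTransGen.lift (p := Eq) (fun x : H.verts => f x)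
    (fun x y hxy => hf x y hxy) _ _ hreach
  rwa [Relation.reflTransGen_eq_self] at this

theorem Subgraph.Connected.exists_mem_edgeSet_of_mem_verts {H : G.Subgraph} (hH : H.Connected)
    (hE : H.edgeSet.Nonempty) {v : V} (hv : v ∈ H.verts) : ∃ e ∈ H.edgeSet, v ∈ e := by
  obtain ⟨e, he⟩ := hE
  induction e using Sym2.ind with
  | _ x y =>
    have hxy : H.Adj x y := he
    have : Nontrivial H.verts :=
      ⟨⟨⟨x, hxy.fst_mem⟩, ⟨y, hxy.snd_mem⟩, fun h => hxy.ne (congrArg Subtype.val h)⟩⟩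
    obtain ⟨u, hvu⟩ := hH.preconnected.exists_adj_of_nontrivial ⟨v, hv⟩
    exact ⟨s(v, u), hvu, Sym2.mem_mk_left _ _⟩

theorem Subgraph.eq_top_of_edgeSet_subset {H : G.Subgraph} (hG : ∀ v, ∃ w, G.Adj v w)
    (hH : G.edgeSet ⊆ H.edgeSet) : H = ⊤ := by
  have hadj : ∀ {u v}, G.Adj u v → H.Adj u v := fun h => Subgraph.mem_edgeSet.mp (hH h)
  refine Subgraph.ext ?_ ?_
  · refine Set.eq_univ_of_forall fun v => ?_
    obtain ⟨w, hvw⟩ := hG v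
    exact (hadj hvw).fst_mem
  · ext u v
    exact ⟨fun h => h.adj_sub, hadj⟩

theorem isNucleus_top (hG : G.Connected) : IsNucleus G ⊤ := by
  refine ⟨⟨Subgraph.topIso.symm.connected_iff.mp hG⟩, fun e _ => ?_⟩
  induction e using Sym2.ind with
  | _ x y => exact ⟨x, Sym2.mem_mk_left _ _, trivial⟩

variable {n : ℕ}

theorem cycleGraph_adj_add_one (i : Fin (n + 2)) : (cycleGraph (n + 2)).Adj i (i + 1) := by
  simp [cycleGraph_adj]

theorem mem_edgeSet_cycleGraph {e : Sym2 (Fin (n + 2))} :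
    e ∈ (cycleGraph (n + 2)).edgeSet ↔ ∃ i, s(i, i + 1) = e := by
  induction e using Sym2.ind with
  | _ u v =>
    rw [mem_edgeSet, cycleGraph_adj, sub_eq_iff_eq_add', sub_eq_iff_eq_add']
    constructor
    · rintro (rfl | rfl)
      exacts [⟨v, Sym2.eq_swap⟩, ⟨u, rfl⟩]
    · rintro ⟨i, hi⟩
      rcases Sym2.eq_iff.mp hi with ⟨rfl, rfl⟩ | ⟨rfl, rfl⟩
      exacts [Or.inr rfl, Or.inl rfl]

theorem injective_cycleGraph_edge : Function.Injective fun i : Fin (n + 3) => s(i, i + 1) := by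
  intro i j hij
  rcases Sym2.eq_iff.mp hij with ⟨h, -⟩ | ⟨rfl, h⟩
  · exact h
  · rw [add_assoc, add_eq_left] at h
    exact absurd h Fin.one_add_one_ne_zero

def cycleGaps (N : (cycleGraph (n + 3)).Subgraph) : Set (Fin (n + 3)) :=
  {i | s(i, i + 1) ∉ N.edgeSet}

theorem ncard_edgeSet_add_ncard_cycleGaps (N : (cycleGraph (n + 3)).Subgraph) :
    N.edgeSet.ncard + (cycleGaps N).ncard = n + 3 := by
  have hE : N.edgeSet = (fun i => s(i, i + 1)) '' (cycleGaps N)ᶜ := by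
    ext e
    refine ⟨fun he => ?_, ?_⟩
    · obtain ⟨i, rfl⟩ := mem_edgeSet_cycleGraph.mp (N.edgeSet_subset he)
      exact ⟨i, not_not.mpr he, rfl⟩
    · rintro ⟨i, hi, rfl⟩
      exact not_not.mp hi
  rw [hE, Set.ncard_image_of_injective _ injective_cycleGraph_edge, add_comm,
    Set.ncard_add_ncard_compl, Nat.card_fin]

variable {N : (cycleGraph (n + 3)).Subgraph}

theorem three_le_ncard_cycleGaps_of_not_isVertexCover
    (h : ¬ _root_.IsVertexCover (cycleGraph (n + 3)) N.verts) : 3 ≤ (cycleGaps N).ncard := by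
  simp only [_root_.IsVertexCover, not_forall, not_exists, not_and] at h
  obtain ⟨e, he, hcover⟩ := h
  obtain ⟨i, rfl⟩ := mem_edgeSet_cycleGraph.mp he
  have hi : i ∉ N.verts := hcover i (Sym2.mem_mk_left _ _)
  have hi1 : i + 1 ∉ N.verts := hcover _ (Sym2.mem_mk_right _ _)
  have hsub : {i - 1, i, i + 1} ⊆ cycleGaps N := by
    rintro j (rfl | rfl | rfl) hj
    · exact hi (by simpa using N.mem_verts_of_mem_edge hj (Sym2.mem_mk_right _ _))
    · exact hi (N.mem_verts_of_mem_edge hj (Sym2.mem_mk_left _ _))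
    · exact hi1 (N.mem_verts_of_mem_edge hj (Sym2.mem_mk_left _ _))
  have hthree : ({i - 1, i, i + 1} : Set (Fin (n + 3))).ncard = 3 := by
    rw [Set.ncard_eq_three]
    refine ⟨_, _, _, by simp, ?_, by simp, rfl⟩
    rw [Ne, sub_eq_iff_eq_add, add_assoc, left_eq_add]
    exact Fin.one_add_one_ne_zero
  exact hthree.symm.trans_le (Set.ncard_le_ncard hsub)

/-- With the cycle edges at `a < b < c` deleted, the arcs `(a, b]`, `(b, c]` and `(c, a]` that
remain are labelled `0`, `1` and `2`. -/
def arcLabel (a b c x : Fin (n + 3)) : ℕ :=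
  if x ≤ a then 2 else if x ≤ b then 0 else if x ≤ c then 1 else 2

theorem arcLabel_add_one {a b c x : Fin (n + 3)} (ha : x ≠ a) (hb : x ≠ b) (hc : x ≠ c) :
    arcLabel a b c (x + 1) = arcLabel a b c x := by
  simp only [Ne, Fin.ext_iff] at ha hb hc
  simp only [arcLabel, Fin.le_def, Fin.val_add_one, Fin.ext_iff, Fin.val_last]
  split_ifs <;> omega

theorem arcLabel_of_mem_gap {a b c : Fin (n + 3)} (hab : a < b) (hbc : b < c) :
    (∀ u ∈ s(a, a + 1), arcLabel a b c u = 2 ∨ arcLabel a b c u = 0) ∧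
    (∀ u ∈ s(b, b + 1), arcLabel a b c u = 0 ∨ arcLabel a b c u = 1) ∧
    (∀ u ∈ s(c, c + 1), arcLabel a b c u = 1 ∨ arcLabel a b c u = 2) := by
  rw [Fin.lt_def] at hab hbc
  refine ⟨?_, ?_, ?_⟩ <;> intro u hu <;> rcases Sym2.mem_iff.mp hu with rfl | rfl <;>
    simp only [arcLabel, Fin.le_def, Fin.val_add_one, Fin.ext_iff, Fin.val_last] <;>
    split_ifs <;> omega

theorem not_isNucleus_of_mem_cycleGaps {a b c : Fin (n + 3)} (hab : a < b) (hbc : b < c)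
    (ha : a ∈ cycleGaps N) (hb : b ∈ cycleGaps N) (hc : c ∈ cycleGaps N) :
    ¬ IsNucleus (cycleGraph (n + 3)) N := by
  rintro ⟨hconn, hcover⟩
  have hstep : ∀ x y, N.Adj x y → arcLabel a b c x = arcLabel a b c y := by
    intro x y hxy
    have hxy : s(x, y) ∈ N.edgeSet := hxy
    obtain ⟨i, hi⟩ := mem_edgeSet_cycleGraph.mp (N.edgeSet_subset hxy)
    have hgap : ∀ j ∈ cycleGaps N, i ≠ j := by
      rintro j hj rfl
      exact hj (hi ▸ hxy)
    have := arcLabel_add_one (hgap a ha) (hgap b hb) (hgap c hc)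
    rcases Sym2.eq_iff.mp hi with ⟨rfl, rfl⟩ | ⟨rfl, rfl⟩
    exacts [this.symm, this]
  obtain ⟨v, hv⟩ := hconn.nonempty
  have hlabel : ∀ u ∈ N.verts, arcLabel a b c u = arcLabel a b c v :=
    fun u hu => hconn.apply_eq_of_forall_adj hstep hu hv
  obtain ⟨hA, hB, hC⟩ := arcLabel_of_mem_gap hab hbc
  obtain ⟨ua, hua, hua'⟩ := hcover s(a, a + 1) (cycleGraph_adj_add_one a)
  obtain ⟨ub, hub, hub'⟩ := hcover s(b, b + 1) (cycleGraph_adj_add_one b)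
  obtain ⟨uc, huc, huc'⟩ := hcover s(c, c + 1) (cycleGraph_adj_add_one c)
  have := hA ua hua
  have := hB ub hub
  have := hC uc huc
  have := hlabel ua hua'
  have := hlabel ub hub'
  have := hlabel uc huc'
  omega

theorem ncard_cycleGaps_le_two_of_isNucleus (hN : IsNucleus (cycleGraph (n + 3)) N) :
    (cycleGaps N).ncard ≤ 2 := by
  by_contra! h
  obtain ⟨a, ha, b, hb, c, hc, hab, hbc⟩ := Set.exists_lt_lt_of_two_lt_ncard (Set.toFinite _) h
  exact not_isNucleus_of_mem_cycleGaps hab hbc ha hb hc hN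

theorem eq_top_of_cycleGaps_eq_empty (h : cycleGaps N = ∅) : N = ⊤ :=
  Subgraph.eq_top_of_edgeSet_subset (fun v => ⟨v + 1, cycleGraph_adj_add_one v⟩) fun e he => by
    obtain ⟨i, rfl⟩ := mem_edgeSet_cycleGraph.mp he
    by_contra hi
    exact h.subset hi

end SimpleGraph

theorem stmt_10 (n : ℕ) (hn : 3 ≤ n) (N : (SimpleGraph.cycleGraph n).Subgraph) :
    IsNucleus (SimpleGraph.cycleGraph n) N ↔
      (N = ⊤ ∨
        (N.Connected ∧ (∀ v ∈ N.verts, ∃ e ∈ N.edgeSet, v ∈ e) ∧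
          (N.edgeSet.ncard = n - 2 ∨ N.edgeSet.ncard = n - 1))) := by
  obtain ⟨m, rfl⟩ : ∃ m, n = m + 3 := ⟨n - 3, by omega⟩
  have hcount := ncard_edgeSet_add_ncard_cycleGaps N
  constructor
  · intro hN
    have hgaps := ncard_cycleGaps_le_two_of_isNucleus hN
    rcases Nat.eq_zero_or_pos (cycleGaps N).ncard with h0 | hpos
    · exact Or.inl (eq_top_of_cycleGaps_eq_empty ((Set.ncard_eq_zero (Set.toFinite _)).mp h0))
    · have hE : N.edgeSet.Nonempty := Set.nonempty_of_ncard_ne_zero (by omega)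
      exact Or.inr ⟨hN.1, fun v hv => hN.1.exists_mem_edgeSet_of_mem_verts hE hv, by omega⟩
  · rintro (rfl | ⟨hconn, -, hcard⟩)
    · exact isNucleus_top cycleGraph_connected
    · refine ⟨hconn, ?_⟩
      by_contra hcover
      have := three_le_ncard_cycleGaps_of_not_isVertexCover hcover
      omega
end

section
/- Let G be a connected simple graph with at least 3 vertices, x ∈ V(G), and fix a linear order on E(G). For F ∈ A_x with Shade_x(F) ⊊ E(G), let σ(F) be the minimum edge of E(G) \ Shade_x(F). Then: (a) if σ(F) ∉ F, then F ∪ {σ(F)} ∈ A_x and σ(F ∪ {σ(F)}) = σ(F); (b) if σ(F) ∈ F, then F \ {σ(F)} ∈ A_x and σ(F \ {σ(F)}) = σ(F). Hence the rule pairing F with F ∪ {σ(F)} when σ(F) ∉ F defines a perfect matching (involution) on A_x. -/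
attribute [-instance] Sym2.instPartialOrder

open SimpleGraph

lemma aux_walk {V : Type*} (F T : Set (Sym2 V)) (m : Sym2 V) (hT : T \ {m} ⊆ F)
    {a b : V} (w : (SimpleGraph.fromEdgeSet T).Walk a b)
    (ha : ∀ u ∈ m, ¬ (SimpleGraph.fromEdgeSet F).Reachable u a) :
    (SimpleGraph.fromEdgeSet (T \ {m})).Reachable a b := by
  induction w with
  | nil => exact Reachable.refl _
  | @cons a c b h p ih =>
    rw [SimpleGraph.fromEdgeSet_adj] at h
    have hne : s(a, c) ≠ m := by
      intro hc
      exact ha a (by rw [← hc]; exact Sym2.mem_mk_left a c) (Reachable.refl a)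
    have hadj : (SimpleGraph.fromEdgeSet (T \ {m})).Adj a c := by
      rw [SimpleGraph.fromEdgeSet_adj]
      exact ⟨⟨h.1, hne⟩, h.2⟩
    have hadjF : (SimpleGraph.fromEdgeSet F).Adj a c := by
      rw [SimpleGraph.fromEdgeSet_adj]
      exact ⟨hT ⟨h.1, hne⟩, h.2⟩
    have hc : ∀ u ∈ m, ¬ (SimpleGraph.fromEdgeSet F).Reachable u c := by
      intro u hu hr
      exact ha u hu (hr.trans hadjF.symm.reachable)
    exact hadj.reachable.trans (ih hc)

lemma shade_union {V : Type*} (G : SimpleGraph V) (x : V) (F : Set (Sym2 V)) (m : Sym2 V)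
    (hm : ∀ u ∈ m, ¬ (SimpleGraph.fromEdgeSet F).Reachable u x) :
    Shade G x (F ∪ {m}) = Shade G x F := by
  ext e
  constructor
  · rintro ⟨he, u, hu, hr⟩
    refine ⟨he, u, hu, ?_⟩
    have hT : (F ∪ {m}) \ {m} ⊆ F := by
      intro e he
      rcases he with ⟨h1, h2⟩
      rcases h1 with h | h
      · exact h
      · exact absurd h h2
    have := aux_walk F (F ∪ {m}) m hT hr.symm.some hm
    exact (this.mono (SimpleGraph.fromEdgeSet_mono hT)).symm
  · rintro ⟨he, u, hu, hr⟩
    exact ⟨he, u, hu, hr.mono (SimpleGraph.fromEdgeSet_mono Set.subset_union_left)⟩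

lemma shade_diff {V : Type*} (G : SimpleGraph V) (x : V) (F : Set (Sym2 V)) (m : Sym2 V)
    (hm : ∀ u ∈ m, ¬ (SimpleGraph.fromEdgeSet F).Reachable u x) :
    Shade G x (F \ {m}) = Shade G x F := by
  ext e
  constructor
  · rintro ⟨he, u, hu, hr⟩
    exact ⟨he, u, hu, hr.mono (SimpleGraph.fromEdgeSet_mono Set.diff_subset)⟩
  · rintro ⟨he, u, hu, hr⟩
    exact ⟨he, u, hu, (aux_walk F F m Set.diff_subset hr.symm.some hm).symm⟩

theorem stmt_18 {V : Type*} [Fintype V] (G : SimpleGraph V) (hG : G.Connected)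
    (h3 : 3 ≤ Fintype.card V) (x : V) [LinearOrder (Sym2 V)]
    (F : Set (Sym2 V)) (hF : F ∈ Avert G x)
    (m : Sym2 V) (hm : m ∈ G.edgeSet \ Shade G x F)
    (hmin : ∀ e ∈ G.edgeSet \ Shade G x F, m ≤ e) :
    (m ∉ F →
      F ∪ {m} ∈ Avert G x ∧
        m ∈ G.edgeSet \ Shade G x (F ∪ {m}) ∧
        ∀ e ∈ G.edgeSet \ Shade G x (F ∪ {m}), m ≤ e) ∧
    (m ∈ F →
      F \ {m} ∈ Avert G x ∧
        m ∈ G.edgeSet \ Shade G x (F \ {m}) ∧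
        ∀ e ∈ G.edgeSet \ Shade G x (F \ {m}), m ≤ e) := by
  obtain ⟨hFsub, hFss⟩ := hF
  have hm' : ∀ u ∈ m, ¬ (SimpleGraph.fromEdgeSet F).Reachable u x := by
    intro u hu hr
    exact hm.2 ⟨hm.1, u, hu, hr⟩
  have hU := shade_union G x F m hm'
  have hD := shade_diff G x F m hm'
  constructor
  · intro _
    rw [hU]
    refine ⟨⟨?_, by rw [hU]; exact hFss⟩, hm, hmin⟩
    intro e he
    rcases he with h | h
    · exact hFsub h
    · rw [h]; exact hm.1
  · intro _
    rw [hD]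
    exact ⟨⟨fun e he => hFsub he.1, by rw [hD]; exact hFss⟩, hm, hmin⟩
end
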